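/- Let A be a real m×n matrix. Let S_c be a real m×l matrix whose column space contains the column space of A, and let S_r be a real n×l' matrix whose column space contains the column space of Aᵗ. Suppose J_c is a list of row indices of S_c and X_c is a real matrix with S_c = X_c · S_c(J_c,:), and suppose J_r is a list of row indices of S_r and X_r is a real matrix with S_r = X_r · S_r(J_r,:). Then A = X_c · A(J_c, J_r) · X_rᵗ, where A(J_c, J_r) is the submatrix of A with rows indexed by J_c and columns indexed by J_r. (Thus the middle factor of the factorization is obtained by simply extracting a submatrix of A.) -/

import Mathlib

/-!
Since the columns of `A` lie in the column space of `S`, `A = S * Y` for some `Y`; hence any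
row-selection identity `S = X * S(J,:)` multiplies through to `A = X * A(J,:)`. Applied to `Sc`
and `A`, and to `Sr` and `Aᵀ`, this reproduces `A` from its rows `Jc` and from its columns `Jr`,
and substituting the second identity into the first gives `A = Xc * A(Jc,Jr) * Xrᵀ`.
-/

open Matrix

namespace Matrix

variable {R m n l k : Type*} [CommSemiring R]

theorem exists_eq_mul_of_range_mulVecLin_le [Fintype n] [Fintype l]
    {A : Matrix m n R} {S : Matrix m l R}
    (h : LinearMap.range A.mulVecLin ≤ LinearMap.range S.mulVecLin) :
    ∃ Y : Matrix l n R, A = S * Y := by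
  classical
  have hcol : ∀ j, ∃ y, S *ᵥ y = A.col j := fun j =>
    h ⟨Pi.single j 1, mulVec_single_one A j⟩
  choose y hy using hcol
  refine ⟨(of y)ᵀ, ext fun i j => ?_⟩
  rw [← col_apply A j i, ← hy j]
  rfl

theorem eq_mul_submatrix_of_range_mulVecLin_le [Fintype n] [Fintype l] [Fintype k]
    {A : Matrix m n R} {S : Matrix m l R}
    (h : LinearMap.range A.mulVecLin ≤ LinearMap.range S.mulVecLin)
    {J : k → m} {X : Matrix m k R} (hS : S = X * S.submatrix J id) :
    A = X * A.submatrix J id := by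
  obtain ⟨Y, rfl⟩ := exists_eq_mul_of_range_mulVecLin_le h
  calc S * Y = X * S.submatrix J id * Y := by rw [← hS]
    _ = X * (S * Y).submatrix J id := Matrix.mul_assoc _ _ _

theorem eq_submatrix_mul_transpose_of_range_mulVecLin_transpose_le [Fintype m] [Fintype l]
    [Fintype k] {A : Matrix m n R} {S : Matrix n l R}
    (h : LinearMap.range Aᵀ.mulVecLin ≤ LinearMap.range S.mulVecLin)
    {J : k → n} {X : Matrix n k R} (hS : S = X * S.submatrix J id) :
    A = A.submatrix id J * Xᵀ := by
  have := congrArg transpose (eq_mul_submatrix_of_range_mulVecLin_le h hS)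
  rwa [transpose_transpose, transpose_mul, transpose_submatrix] at this

end Matrix

theorem stmt_6 (m n l l' jc jr : ℕ)
    (A : Matrix (Fin m) (Fin n) ℝ)
    (Sc : Matrix (Fin m) (Fin l) ℝ) (Sr : Matrix (Fin n) (Fin l') ℝ)
    (hc_span : LinearMap.range (Matrix.mulVecLin A) ≤ LinearMap.range (Matrix.mulVecLin Sc))
    (hr_span : LinearMap.range (Matrix.mulVecLin Aᵀ) ≤ LinearMap.range (Matrix.mulVecLin Sr))
    (Jc : Fin jc → Fin m) (Xc : Matrix (Fin m) (Fin jc) ℝ)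
    (hSc : Sc = Xc * Sc.submatrix Jc id)
    (Jr : Fin jr → Fin n) (Xr : Matrix (Fin n) (Fin jr) ℝ)
    (hSr : Sr = Xr * Sr.submatrix Jr id) :
    A = Xc * A.submatrix Jc Jr * Xrᵀ := by
  have hcols := eq_submatrix_mul_transpose_of_range_mulVecLin_transpose_le hr_span hSr
  calc A = Xc * A.submatrix Jc id := eq_mul_submatrix_of_range_mulVecLin_le hc_span hSc
    _ = Xc * (A.submatrix id Jr * Xrᵀ).submatrix Jc id := by rw [← hcols]
    _ = Xc * A.submatrix Jc Jr * Xrᵀ := (Matrix.mul_assoc Xc (A.submatrix Jc Jr) Xrᵀ).symm
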